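/- Let n ≥ 6 be divisible by 6, Δ > 0, T > 0, and set β = 1/T and P_min(β) = (1/8)[3 + 2·tanh^{n/2}(βΔ/2) + 3·tanh^n(βΔ/2)] (the minimum triangle-game winning probability of the thermal cluster state). Then P_min(β) > 7/8 if and only if tanh^{n/2}(Δ/(2T)) > (√13 − 1)/3, which holds if and only if T < T_c := Δ / (2 · artanh( ((√13 − 1)/3)^{2/n} )). (Equivalently, for x ∈ [0,1), (3 + 2x + 3x²)/8 > 7/8 if and only if x > (√13 − 1)/3.) -/

import Mathlib

/-!
Write `x = tanh^{n/2}(Δ/(2T)) ∈ [0,1)`. Since `n` is even, `P_min = (3 + 2x + 3x²)/8`, and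
`3x² + 2x − 4 = 3 (x − (√13 − 1)/3) (x + (√13 + 1)/3)` with a positive second factor, so
`P_min > 7/8` iff `x > (√13 − 1)/3`. Taking `(n/2)`-th roots and applying the increasing
function `artanh` turns this into a bound on `Δ/(2T)`, i.e. on `T`.
-/

noncomputable section

/-- The inverse hyperbolic tangent on `(−1,1)`: `artanh x = (1/2) log((1+x)/(1−x))`. -/
def Real.artanhLog (x : ℝ) : ℝ := Real.log ((1 + x) / (1 - x)) / 2

open Set

namespace Real

theorem artanhLog_eq_artanh {x : ℝ} (hx : x ∈ Icc (-1) 1) : artanhLog x = artanh x := by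
  rw [artanhLog, artanh_eq_half_log hx]
  ring

theorem tanh_nonneg {x : ℝ} (hx : 0 ≤ x) : 0 ≤ tanh x := by
  rw [tanh_eq_sinh_div_cosh]
  exact div_nonneg (sinh_nonneg_iff.2 hx) (cosh_pos x).le

theorem lt_tanh_iff_artanh_lt {y : ℝ} (hy : y ∈ Ioo (-1) 1) (t : ℝ) :
    y < tanh t ↔ artanh y < t := by
  rw [← artanh_lt_artanh_iff hy ⟨neg_one_lt_tanh t, tanh_lt_one t⟩, artanh_tanh]

theorem rpow_inv_natCast_lt_iff {x y : ℝ} {m : ℕ} (hx : 0 ≤ x) (hy : 0 ≤ y) (hm : m ≠ 0) :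
    x ^ (m⁻¹ : ℝ) < y ↔ x < y ^ m := by
  rw [rpow_inv_lt_iff_of_pos hx hy (by positivity), rpow_natCast]

end Real

open Real

theorem seven_div_eight_lt_quadratic_iff {x : ℝ} (hx : 0 ≤ x) :
    7 / 8 < (3 + 2 * x + 3 * x ^ 2) / 8 ↔ (√13 - 1) / 3 < x := by
  have hfactor : (3 + 2 * x + 3 * x ^ 2) / 8 - 7 / 8 =
      3 / 8 * (x + (√13 + 1) / 3) * (x - (√13 - 1) / 3) := by
    linear_combination (1 / 24 : ℝ) * sq_sqrt (show (0 : ℝ) ≤ 13 by norm_num)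
  have hpos : 0 < 3 / 8 * (x + (√13 + 1) / 3) := by positivity
  rw [← sub_pos, hfactor, mul_pos_iff_of_pos_left hpos, sub_pos]

theorem lt_div_two_mul_comm {a b c : ℝ} (ha : 0 < a) (hc : 0 < c) :
    a < b / (2 * c) ↔ c < b / (2 * a) := by
  rw [lt_div_iff₀ (by positivity), lt_div_iff₀ (by positivity), mul_left_comm, mul_comm c,
    mul_assoc]

theorem lt_tanh_div_two_mul_pow_iff {c Δ T : ℝ} {m : ℕ} (hc : c ∈ Ioo 0 1) (hm : m ≠ 0)
    (hΔ : 0 < Δ) (hT : 0 < T) :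
    c < tanh (Δ / (2 * T)) ^ m ↔ T < Δ / (2 * artanh (c ^ (m⁻¹ : ℝ))) := by
  have hroot : c ^ (m⁻¹ : ℝ) ∈ Ioo 0 1 :=
    ⟨rpow_pos_of_pos hc.1 _, rpow_lt_one hc.1.le hc.2 (by positivity)⟩
  rw [← rpow_inv_natCast_lt_iff hc.1.le (tanh_nonneg (by positivity)) hm,
    lt_tanh_iff_artanh_lt ⟨by linarith [hroot.1], hroot.2⟩,
    lt_div_two_mul_comm (artanh_pos hroot) hT]

/-- Critical temperature of the thermal cluster state: with `β = 1/T` and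
`P_min(β) = (1/8)[3 + 2 tanh^{n/2}(βΔ/2) + 3 tanh^n(βΔ/2)]`, one has `P_min(β) > 7/8` iff
`tanh^{n/2}(Δ/(2T)) > (√13 − 1)/3`, which holds iff
`T < T_c = Δ/(2 artanh(((√13 − 1)/3)^{2/n}))`. Equivalently, for `x ∈ [0,1)`,
`(3 + 2x + 3x²)/8 > 7/8` iff `x > (√13 − 1)/3`. -/
theorem thermal_cluster_critical_temperature (n : ℕ) (hn6 : 6 ≤ n) (hn : 6 ∣ n)
    (Δ T β : ℝ) (hΔ : 0 < Δ) (hT : 0 < T) (hβ : β = 1 / T) :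
    ((3 + 2 * Real.tanh (β * Δ / 2) ^ (n / 2) + 3 * Real.tanh (β * Δ / 2) ^ n) / 8 > 7 / 8
      ↔ Real.tanh (Δ / (2 * T)) ^ (n / 2) > (Real.sqrt 13 - 1) / 3) ∧
    (Real.tanh (Δ / (2 * T)) ^ (n / 2) > (Real.sqrt 13 - 1) / 3
      ↔ T < Δ / (2 * Real.artanhLog (((Real.sqrt 13 - 1) / 3) ^ ((2 : ℝ) / (n : ℝ))))) ∧
    (∀ x : ℝ, 0 ≤ x → x < 1 →
      ((3 + 2 * x + 3 * x ^ 2) / 8 > 7 / 8 ↔ x > (Real.sqrt 13 - 1) / 3)) := by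
  obtain ⟨m, rfl⟩ : 2 ∣ n := Nat.dvd_trans (by norm_num) hn
  have hm : m ≠ 0 := by omega
  have hhalf : 2 * m / 2 = m := by omega
  have hexp : (2 : ℝ) / ((2 * m : ℕ) : ℝ) = (m⁻¹ : ℝ) := by
    push_cast
    field_simp
  have hβΔ : β * Δ / 2 = Δ / (2 * T) := by
    rw [hβ]
    ring
  have hc : (√13 - 1) / 3 ∈ Ioo 0 1 := by
    have h1 : 1 < √13 := by rw [lt_sqrt] <;> norm_num
    have h4 : √13 < 4 := by rw [sqrt_lt'] <;> norm_num
    constructor <;> linarith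
  have hroot : ((√13 - 1) / 3) ^ (m⁻¹ : ℝ) ∈ Icc (-1) 1 :=
    ⟨by linarith [rpow_nonneg hc.1.le (m⁻¹ : ℝ)], rpow_le_one hc.1.le hc.2.le (by positivity)⟩
  refine ⟨?_, ?_, fun x hx _ => seven_div_eight_lt_quadratic_iff hx⟩
  · rw [hhalf, hβΔ, pow_mul', gt_iff_lt, seven_div_eight_lt_quadratic_iff
      (pow_nonneg (tanh_nonneg (by positivity)) m)]
  · rw [hhalf, hexp, artanhLog_eq_artanh hroot]
    exact lt_tanh_div_two_mul_pow_iff hc hm hΔ hT
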